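/- A slice regular function whose twistor lift lies on the non-normal cubic X₀X₃² + X₁²X₂ = 0: define f₁ : ℍ∖ℝ → ℍ by f₁(α + Iβ) = −(α + Iβ)²·(1 − I·i)/2 + (α + Iβ)·(1 + I·i)/2 for β > 0, I ∈ 𝕊. Then f₁ is a slice regular function, and for every u in the real span of {1, i}, with I = (1 + u·j)⁻¹·i·(1 + u·j) and v = α + iβ (β > 0), one has the identity (1 + u·j)·f₁(α + Iβ) = −v² + (u·v)·j; in particular the lifted point with homogeneous coordinates (X₀, X₁, X₂, X₃) = (1, u, −v², u·v) satisfies X₀·X₃² + X₁²·X₂ = 0. -/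

import Mathlib

/-!
Write `φ_J : ℂ → ℍ` (`Complex.liftAux J`) for `x + iy ↦ x + J y`. The intertwining identities
`φ_J(w)(1 - J i) = (1 - J i) φ_i(w)` and `φ_J(w)(1 + J i) = (1 + J i) φ_i(w̄)` turn `f₁(φ_J z)`
into `φ_i(F₁ z) + J φ_i(F₂ z)` with `F₁ = (z̄ - z²)/2`, `F₂ = i(z² + z̄)/2` on the upper
half-plane; these satisfy the Cauchy–Riemann system, and since `φ_J(z) = φ_{-J}(z̄)` the stem
function on the lower half-plane is their even/odd reflection. For the twistor identity,
`c = 1 + u j` conjugates `J = c⁻¹ i c` to `i`, so `c φ_J(z) = v c`, while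
`c (1 - J i) = c - i c i = 2` and `c (1 + J i) = c + i c i = 2 u j`.
-/

noncomputable def qi : Quaternion ℝ := ⟨0, 1, 0, 0⟩

noncomputable def qj : Quaternion ℝ := ⟨0, 0, 1, 0⟩

open ComplexConjugate Complex

namespace Complex

variable {A : Type*} [Ring A] [Algebra ℝ A]

theorem liftAux_apply_eq_add_mul (J : A) (hJ : J * J = -1) (w : ℂ) :
    liftAux J hJ w = algebraMap ℝ A w.re + J * algebraMap ℝ A w.im := by
  rw [liftAux_apply, Algebra.smul_def, Algebra.commutes]

theorem liftAux_neg_conj (J : A) (hJ : J * J = -1) (w : ℂ) :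
    liftAux (-J) (by rw [neg_mul_neg, hJ]) (conj w) = liftAux J hJ w := by
  simp only [liftAux_apply, conj_re, conj_im, neg_smul_neg]

theorem liftAux_mul_one_sub_mul (J K : A) (hJ : J * J = -1) (hK : K * K = -1) (w : ℂ) :
    liftAux J hJ w * (1 - J * K) = (1 - J * K) * liftAux K hK w := by
  simp only [liftAux_apply, add_mul, mul_add, mul_sub, sub_mul, smul_mul_assoc, mul_smul_comm,
    one_mul, mul_one, ← mul_assoc, hJ, Algebra.algebraMap_eq_smul_one]
  rw [mul_assoc J K K, hK]
  simp only [mul_neg, mul_one, neg_mul, one_mul]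
  module

theorem liftAux_mul_one_add_mul (J K : A) (hJ : J * J = -1) (hK : K * K = -1) (w : ℂ) :
    liftAux J hJ w * (1 + J * K) = (1 + J * K) * liftAux K hK (conj w) := by
  simp only [liftAux_apply, conj_re, conj_im, add_mul, mul_add, smul_mul_assoc, mul_smul_comm,
    one_mul, mul_one, ← mul_assoc, hJ, Algebra.algebraMap_eq_smul_one]
  rw [mul_assoc J K K, hK]
  simp only [mul_neg, mul_one, neg_mul, one_mul, neg_smul]
  module

theorem liftAux_quaternion_apply (J : Quaternion ℝ) (hJ : J * J = -1) (z : ℂ) :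
    liftAux J hJ z = (z.re : Quaternion ℝ) + J * (z.im : Quaternion ℝ) := by
  rw [liftAux_apply_eq_add_mul, Quaternion.algebraMap_def]

end Complex

namespace SemiconjBy

variable {A : Type*} [Ring A]

theorem liftAux [Algebra ℝ A] {c J K : A} (h : SemiconjBy c J K) (hJ : J * J = -1)
    (hK : K * K = -1) (w : ℂ) : SemiconjBy c (liftAux J hJ w) (liftAux K hK w) := by
  simp only [liftAux_apply]
  exact SemiconjBy.add_right (Algebra.commute_algebraMap_right _ c) (h.smul_right _)

theorem mul_self_eq_neg_one [NoZeroDivisors A] {c J K : A} (h : SemiconjBy c J K) (hc : c ≠ 0)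
    (hK : K * K = -1) : J * J = -1 := by
  have hJJ : c * (J * J) = c * -1 := by rw [(h.mul_right h).eq, hK, neg_one_mul, mul_neg_one]
  exact mul_left_cancel₀ hc hJJ

end SemiconjBy

section Extension

variable {E : Type*}

noncomputable def upperEvenExtension (F : ℂ → E) (z : ℂ) : E :=
  if 0 < z.im then F z else F (conj z)

noncomputable def upperOddExtension [Neg E] (F : ℂ → E) (z : ℂ) : E :=
  if 0 < z.im then F z else -F (conj z)

theorem upperEvenExtension_conj (F : ℂ → E) {z : ℂ} (hz : z.im ≠ 0) :
    upperEvenExtension F (conj z) = upperEvenExtension F z := by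
  rcases hz.lt_or_gt with hz | hz <;> simp [upperEvenExtension, hz, hz.not_gt]

theorem upperOddExtension_conj [InvolutiveNeg E] (F : ℂ → E) {z : ℂ} (hz : z.im ≠ 0) :
    upperOddExtension F (conj z) = -upperOddExtension F z := by
  rcases hz.lt_or_gt with hz | hz <;> simp [upperOddExtension, hz, hz.not_gt]

theorem liftAux_upperExtension {A : Type*} [Ring A] [Algebra ℝ A] {f : A → A} {F₁ F₂ : ℂ → A}
    (hf : ∀ z : ℂ, 0 < z.im → ∀ (J : A) (hJ : J * J = -1),
      f (liftAux J hJ z) = F₁ z + J * F₂ z)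
    {z : ℂ} (hz : z.im ≠ 0) (J : A) (hJ : J * J = -1) :
    f (liftAux J hJ z) = upperEvenExtension F₁ z + J * upperOddExtension F₂ z := by
  rcases hz.lt_or_gt with hneg | hpos
  · rw [← liftAux_neg_conj J hJ, hf _ (by simpa using hneg)]
    simp [upperEvenExtension, upperOddExtension, hneg.not_gt]
  · simp only [upperEvenExtension, upperOddExtension, if_pos hpos]
    exact hf z hpos J hJ

end Extension

section CauchyRiemann

variable {E F : Type*} [NormedAddCommGroup E] [NormedSpace ℝ E]
  [NormedAddCommGroup F] [NormedSpace ℝ F]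

def CauchyRiemannAt (F₁ F₂ : ℂ → E) (z : ℂ) : Prop :=
  ∃ D₁ D₂ : ℂ →L[ℝ] E, HasFDerivAt F₁ D₁ z ∧ HasFDerivAt F₂ D₂ z ∧
    D₁ 1 = D₂ I ∧ D₁ I = -D₂ 1

theorem CauchyRiemannAt.map {F₁ F₂ : ℂ → E} {z : ℂ} (h : CauchyRiemannAt F₁ F₂ z)
    (L : E →L[ℝ] F) : CauchyRiemannAt (L ∘ F₁) (L ∘ F₂) z := by
  obtain ⟨D₁, D₂, h₁, h₂, h1, hI⟩ := h
  exact ⟨L ∘L D₁, L ∘L D₂, L.hasFDerivAt.comp z h₁, L.hasFDerivAt.comp z h₂,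
    by simp [h1], by simp [hI]⟩

theorem CauchyRiemannAt.comp_conj {F₁ F₂ : ℂ → E} {z : ℂ}
    (h : CauchyRiemannAt F₁ F₂ (conj z)) :
    CauchyRiemannAt (fun w => F₁ (conj w)) (fun w => -F₂ (conj w)) z := by
  obtain ⟨D₁, D₂, h₁, h₂, h1, hI⟩ := h
  have hc : HasFDerivAt (conj : ℂ → ℂ) (conjCLE : ℂ →L[ℝ] ℂ) z := conjCLE.hasFDerivAt
  refine ⟨D₁ ∘L conjCLE, -(D₂ ∘L conjCLE), h₁.comp z hc, ?_, ?_, ?_⟩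
  · exact (h₂.comp z hc).neg
  · simp [h1]
  · simp [hI]

theorem CauchyRiemannAt.congr_of_eventuallyEq {F₁ F₂ G₁ G₂ : ℂ → E} {z : ℂ}
    (h : CauchyRiemannAt F₁ F₂ z) (h₁ : G₁ =ᶠ[nhds z] F₁) (h₂ : G₂ =ᶠ[nhds z] F₂) :
    CauchyRiemannAt G₁ G₂ z := by
  obtain ⟨D₁, D₂, hF₁, hF₂, h1, hI⟩ := h
  exact ⟨D₁, D₂, hF₁.congr_of_eventuallyEq h₁, hF₂.congr_of_eventuallyEq h₂, h1, hI⟩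

theorem cauchyRiemannAt_upperExtension {F₁ F₂ : ℂ → E}
    (h : ∀ w : ℂ, 0 < w.im → CauchyRiemannAt F₁ F₂ w) {z : ℂ} (hz : z.im ≠ 0) :
    CauchyRiemannAt (upperEvenExtension F₁) (upperOddExtension F₂) z := by
  rcases hz.lt_or_gt with hneg | hpos
  · have hlower : ∀ᶠ w in nhds z, ¬ 0 < w.im :=
      continuous_im.tendsto z |>.eventually (gt_mem_nhds hneg) |>.mono fun w hw => hw.not_gt
    exact (h _ (by simpa using hneg)).comp_conj.congr_of_eventuallyEq
      (hlower.mono fun w hw => if_neg hw) (hlower.mono fun w hw => if_neg hw)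
  · have hupper : ∀ᶠ w in nhds z, 0 < w.im :=
      continuous_im.tendsto z |>.eventually (lt_mem_nhds hpos)
    exact (h z hpos).congr_of_eventuallyEq
      (hupper.mono fun w hw => if_pos hw) (hupper.mono fun w hw => if_pos hw)

end CauchyRiemann

section Cubic

noncomputable def cubicStem₁ (z : ℂ) : ℂ := (2 : ℝ)⁻¹ • (conj z - z ^ 2)

noncomputable def cubicStem₂ (z : ℂ) : ℂ := (2 : ℝ)⁻¹ • (I * (z ^ 2 + conj z))

theorem cauchyRiemannAt_cubicStem (z : ℂ) : CauchyRiemannAt cubicStem₁ cubicStem₂ z := by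
  have hc : HasFDerivAt (conj : ℂ → ℂ) (conjCLE : ℂ →L[ℝ] ℂ) z := conjCLE.hasFDerivAt
  have hsq := (hasDerivAt_pow 2 z).hasFDerivAt.restrictScalars ℝ
  refine ⟨_, _, (hc.sub hsq).const_smul (2 : ℝ)⁻¹,
    ((hsq.add hc).const_mul I).const_smul (2 : ℝ)⁻¹, ?_, ?_⟩
  · simp
    linear_combination (-z) * I_sq
  · simp
    ring

variable {A : Type*} [Ring A] [Algebra ℝ A]

theorem liftAux_cubic_eq_stem (J K : A) (hJ : J * J = -1) (hK : K * K = -1) (z : ℂ) :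
    (2 : ℝ)⁻¹ • (-(liftAux J hJ z ^ 2) * (1 - J * K)) + (2 : ℝ)⁻¹ • (liftAux J hJ z * (1 + J * K))
      = liftAux K hK (cubicStem₁ z) + J * liftAux K hK (cubicStem₂ z) := by
  rw [← map_pow, neg_mul, liftAux_mul_one_sub_mul J K hJ hK, liftAux_mul_one_add_mul J K hJ hK]
  simp only [cubicStem₁, cubicStem₂, map_smul, map_sub, map_mul, map_add, liftAux_apply_I,
    mul_smul_comm, mul_add, sub_mul, add_mul, one_mul, mul_assoc]
  module

theorem twistor_mul_cubic_eq (J K L u : A) (hJ : J * J = -1) (hK : K * K = -1)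
    (hKL : L * K = -(K * L)) (hu : Commute u K) (hc : SemiconjBy (1 + u * L) J K) (z : ℂ) :
    (1 + u * L) * ((2 : ℝ)⁻¹ • (-(liftAux J hJ z ^ 2) * (1 - J * K))
        + (2 : ℝ)⁻¹ • (liftAux J hJ z * (1 + J * K)))
      = -(liftAux K hK z ^ 2) + u * liftAux K hK z * L := by
  set c := 1 + u * L
  set v := liftAux K hK z
  have hcq : SemiconjBy c (liftAux J hJ z) v := hc.liftAux hJ hK z
  have hKcK : K * c * K = -1 + u * L := by
    simp only [c, mul_add, add_mul, mul_one, ← mul_assoc, hK, ← hu.eq]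
    rw [mul_assoc _ L K, hKL, mul_neg, ← mul_assoc, mul_assoc u K K, hK]
    noncomm_ring
  have hminus : c * (1 - J * K) = (2 : ℝ) • 1 := by
    rw [mul_sub, mul_one, ← mul_assoc, hc.eq, hKcK]
    module
  have hplus : c * (1 + J * K) = (2 : ℝ) • (u * L) := by
    rw [mul_add, mul_one, ← mul_assoc, hc.eq, hKcK]
    module
  have hvu : v * u = u * v := (hu.liftAux hK hK z).eq.symm
  calc c * ((2 : ℝ)⁻¹ • (-(liftAux J hJ z ^ 2) * (1 - J * K))
        + (2 : ℝ)⁻¹ • (liftAux J hJ z * (1 + J * K)))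
      = (2 : ℝ)⁻¹ • (-(v ^ 2 * (c * (1 - J * K)))) + (2 : ℝ)⁻¹ • (v * (c * (1 + J * K))) := by
        simp only [mul_add, mul_smul_comm, neg_mul, mul_neg, ← mul_assoc, (hcq.pow_right 2).eq,
          hcq.eq]
    _ = -(v ^ 2) + u * v * L := by
        rw [hminus, hplus, mul_smul_comm, mul_smul_comm, smul_neg, smul_smul, smul_smul,
          inv_mul_cancel₀ two_ne_zero, one_smul, one_smul, mul_one, ← mul_assoc, hvu]

end Cubic

section Quaternion

theorem qi_mul_qi : qi * qi = -1 := by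
  ext <;> simp [Quaternion.re_one, Quaternion.imI_one, Quaternion.imJ_one, Quaternion.imK_one] <;>
    simp [qi]

theorem qj_mul_qi : qj * qi = -(qi * qj) := by
  ext <;> simp <;> simp [qi, qj]

variable {u : Quaternion ℝ}

theorem commute_qi_of_mem_span (hu : u ∈ Submodule.span ℝ ({1, qi} : Set (Quaternion ℝ))) :
    Commute u qi := by
  obtain ⟨s, t, rfl⟩ := Submodule.mem_span_pair.mp hu
  exact ((Commute.one_left qi).smul_left s).add_left ((Commute.refl qi).smul_left t)

theorem one_add_mul_qj_ne_zero (hu : u ∈ Submodule.span ℝ ({1, qi} : Set (Quaternion ℝ))) :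
    1 + u * qj ≠ 0 := by
  obtain ⟨s, t, rfl⟩ := Submodule.mem_span_pair.mp hu
  intro h
  have hre := congrArg QuaternionAlgebra.re h
  simp [Quaternion.re_one, Quaternion.imI_one, Quaternion.imJ_one, Quaternion.imK_one] at hre
  simp [qi, qj, Quaternion.re_zero] at hre

end Quaternion

/-- **A slice regular function whose twistor lift lies on the non-normal cubic
`X₀X₃² + X₁²X₂ = 0`**: the function
`f₁(α + Iβ) = -(α + Iβ)²(1 - I·i)/2 + (α + Iβ)(1 + I·i)/2` is slice regular, its
lift satisfies `(1 + u·j)·f₁(α + Iβ) = -v² + (u·v)·j`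
(`I = (1 + u·j)⁻¹·i·(1 + u·j)`, `v = α + iβ`), and the lifted point
`(1, u, -v², u·v)` satisfies `X₀·X₃² + X₁²·X₂ = 0`. -/
theorem slice_regular_on_nonnormal_cubic_one
    (f₁ : Quaternion ℝ → Quaternion ℝ)
    (hf₁ : ∀ (α β : ℝ), 0 < β → ∀ I : Quaternion ℝ, I ^ 2 = -1 →
      f₁ ((α : Quaternion ℝ) + I * (β : Quaternion ℝ))
        = (2 : ℝ)⁻¹ • (-(((α : Quaternion ℝ) + I * (β : Quaternion ℝ)) ^ 2)
              * (1 - I * qi))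
          + (2 : ℝ)⁻¹ • (((α : Quaternion ℝ) + I * (β : Quaternion ℝ))
              * (1 + I * qi))) :
    (∃ F₁ F₂ : ℂ → Quaternion ℝ,
      (∀ z : ℂ, z.im ≠ 0 →
        F₁ ((starRingEnd ℂ) z) = F₁ z ∧ F₂ ((starRingEnd ℂ) z) = - F₂ z) ∧
      (∀ z : ℂ, z.im ≠ 0 → ∀ I : Quaternion ℝ, I ^ 2 = -1 →
        f₁ ((z.re : Quaternion ℝ) + I * (z.im : Quaternion ℝ)) = F₁ z + I * F₂ z) ∧
      (∀ z : ℂ, z.im ≠ 0 → ∃ D₁ D₂ : ℂ →L[ℝ] Quaternion ℝ,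
        HasFDerivAt F₁ D₁ z ∧ HasFDerivAt F₂ D₂ z ∧
        D₁ 1 = D₂ Complex.I ∧ D₁ Complex.I = - D₂ 1))
    ∧
    (∀ u ∈ Submodule.span ℝ ({1, qi} : Set (Quaternion ℝ)),
      ∀ z : ℂ, 0 < z.im →
        (1 + u * qj) *
            f₁ ((z.re : Quaternion ℝ)
                + ((1 + u * qj)⁻¹ * qi * (1 + u * qj)) * (z.im : Quaternion ℝ))
          = -(((z.re : Quaternion ℝ) + qi * (z.im : Quaternion ℝ)) ^ 2)
            + (u * ((z.re : Quaternion ℝ) + qi * (z.im : Quaternion ℝ))) * qj ∧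
        (u * ((z.re : Quaternion ℝ) + qi * (z.im : Quaternion ℝ))) ^ 2
          + u ^ 2 * (-(((z.re : Quaternion ℝ) + qi * (z.im : Quaternion ℝ)) ^ 2))
          = 0) := by
  have hf : ∀ z : ℂ, 0 < z.im → ∀ (J : Quaternion ℝ) (hJ : J * J = -1),
      f₁ (liftAux J hJ z) = (2 : ℝ)⁻¹ • (-(liftAux J hJ z ^ 2) * (1 - J * qi))
        + (2 : ℝ)⁻¹ • (liftAux J hJ z * (1 + J * qi)) := fun z hz J hJ => by
    rw [liftAux_quaternion_apply]
    exact hf₁ z.re z.im hz J (by rw [sq, hJ])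
  let ι : ℂ →L[ℝ] Quaternion ℝ := (liftAux qi qi_mul_qi).toLinearMap.toContinuousLinearMap
  refine ⟨⟨upperEvenExtension (ι ∘ cubicStem₁), upperOddExtension (ι ∘ cubicStem₂),
    fun z hz => ⟨upperEvenExtension_conj _ hz, upperOddExtension_conj _ hz⟩,
    fun z hz J hJ => ?_,
    fun z hz => cauchyRiemannAt_upperExtension (fun w _ => (cauchyRiemannAt_cubicStem w).map ι) hz⟩,
    fun u hu z hz => ?_⟩
  · rw [← liftAux_quaternion_apply J (by rw [← sq, hJ])]
    exact liftAux_upperExtension (fun w hw J hJ => (hf w hw J hJ).trans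
      (liftAux_cubic_eq_stem J qi hJ qi_mul_qi w)) hz J _
  · set c := 1 + u * qj
    have hconj : SemiconjBy c (c⁻¹ * qi * c) qi := by
      rw [SemiconjBy, ← mul_assoc, ← mul_assoc, mul_inv_cancel₀ (one_add_mul_qj_ne_zero hu),
        one_mul]
    have hJ := hconj.mul_self_eq_neg_one (one_add_mul_qj_ne_zero hu) qi_mul_qi
    have huv : Commute u (liftAux qi qi_mul_qi z) :=
      (commute_qi_of_mem_span hu).liftAux qi_mul_qi qi_mul_qi z
    rw [← liftAux_quaternion_apply _ hJ, ← liftAux_quaternion_apply qi qi_mul_qi, hf z hz _ hJ]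
    exact ⟨twistor_mul_cubic_eq _ qi qj u hJ qi_mul_qi qj_mul_qi (commute_qi_of_mem_span hu)
      hconj z, by rw [huv.mul_pow, mul_neg, add_neg_cancel]⟩
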